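/- (Multi-class Cover lemma.) Fix n ≥ 1 and k ≥ 2, and let φ : [k]^n → ℝ be stable, meaning that for every coordinate (holding the others fixed), max_{r∈[k]} φ(…,r,…) − (1/k) Σ_{i=1}^k φ(…,i,…) ≤ 1/(nk). Then there exists a randomized k-ary prediction algorithm A with μ_A(y) = φ(y) for every y ∈ [k]^n if and only if E φ = 1 − 1/k, where the expectation is under the uniform distribution on [k]^n. -/

import Mathlib

open Finset

noncomputable section

/-- The history (prefix) of the `k`-ary sequence `y` strictly before time `t`. -/
def prefK {n k : ℕ} (y : Fin n → Fin k) (t : Fin n) : Fin t.1 → Fin k :=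
  fun s => y ⟨s.1, s.2.trans t.2⟩

/-- Expected proportion of mistakes of a randomized `k`-ary prediction algorithm whose
prediction at round `t` is drawn from the distribution `q t (prefK y t)` on `[k]`. -/
def mistakesK (n k : ℕ) (q : (t : Fin n) → (Fin t.1 → Fin k) → Fin k → ℝ)
    (y : Fin n → Fin k) : ℝ :=
  (1 / n) * ∑ t : Fin n, (1 - q t (prefK y t) (y t))

/-- Expectation of `φ` under the uniform distribution on `[k]^n`. -/
def unifExpK (n k : ℕ) (φ : (Fin n → Fin k) → ℝ) : ℝ :=
  (∑ y : Fin n → Fin k, φ y) / k ^ n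

/-- `φ : [k]^n → ℝ` is stable: in each coordinate, the maximal value exceeds the average of the
`k` values by at most `1/(nk)`. -/
def StableK (n k : ℕ) (φ : (Fin n → Fin k) → ℝ) : Prop :=
  ∀ (y : Fin n → Fin k) (t : Fin n) (r : Fin k),
    φ (Function.update y t r) - (∑ i : Fin k, φ (Function.update y t i)) / k ≤ 1 / (n * k)

/- ### Auxiliary machinery -/

/-- Summing a function over all single-coordinate replacements counts every point `k` times. -/
lemma sum_update_eq (n k : ℕ) (t : Fin n) (H : (Fin n → Fin k) → ℝ) :
    ∑ y : Fin n → Fin k, ∑ i : Fin k, H (Function.update y t i)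
      = k * ∑ y : Fin n → Fin k, H y := by
  classical
  let e := Equiv.funSplitAt t (Fin k)
  have key : ∀ (p : Fin k × ({ j // j ≠ t } → Fin k)) (i : Fin k),
      Function.update (e.symm p) t i = e.symm (i, p.2) := by
    intro p i
    funext j
    by_cases h : j = t
    · subst h; simp [e, Equiv.funSplitAt, Equiv.piSplitAt]
    · simp [e, Equiv.funSplitAt, Equiv.piSplitAt, h, Function.update_of_ne h]
  calc ∑ y : Fin n → Fin k, ∑ i : Fin k, H (Function.update y t i)
      = ∑ p : Fin k × ({ j // j ≠ t } → Fin k), ∑ i : Fin k, H (Function.update (e.symm p) t i) :=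
        (Equiv.sum_comp e.symm _).symm
    _ = ∑ p : Fin k × ({ j // j ≠ t } → Fin k), ∑ i : Fin k, H (e.symm (i, p.2)) := by
        simp_rw [key]
    _ = ∑ a : Fin k, ∑ r : { j // j ≠ t } → Fin k, ∑ i : Fin k, H (e.symm (i, r)) := by
        rw [Fintype.sum_prod_type]
    _ = k * ∑ r : { j // j ≠ t } → Fin k, ∑ i : Fin k, H (e.symm (i, r)) := by
        rw [Finset.sum_const, card_univ, Fintype.card_fin, nsmul_eq_mul]
    _ = k * ∑ p : Fin k × ({ j // j ≠ t } → Fin k), H (e.symm p) := by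
        rw [Fintype.sum_prod_type_right]
    _ = k * ∑ y : Fin n → Fin k, H y := by rw [Equiv.sum_comp e.symm]

/-- Splice: first `m` coordinates from `y`, the rest from `z`. -/
def spliceK {n k : ℕ} (m : ℕ) (y z : Fin n → Fin k) : Fin n → Fin k :=
  fun s => if s.1 < m then y s else z s

/-- Conditional expectation of `φ` given the first `m` coordinates of `y`. -/
def condF {n : ℕ} (k : ℕ) (φ : (Fin n → Fin k) → ℝ) (m : ℕ) (y : Fin n → Fin k) : ℝ :=
  (∑ z : Fin n → Fin k, φ (spliceK m y z)) / (k : ℝ) ^ n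

lemma spliceK_n {n k : ℕ} (y z : Fin n → Fin k) : spliceK n y z = y := by
  funext s; simp [spliceK, s.2]

lemma spliceK_zero {n k : ℕ} (y z : Fin n → Fin k) : spliceK 0 y z = z := by
  funext s; simp [spliceK]

lemma spliceK_congr {n k : ℕ} {m : ℕ} {y y' : Fin n → Fin k}
    (h : ∀ s : Fin n, s.1 < m → y s = y' s) (z : Fin n → Fin k) :
    spliceK m y z = spliceK m y' z := by
  funext s
  simp only [spliceK]
  split_ifs with hs
  · exact h s hs
  · rfl

lemma condF_congr {n k : ℕ} (φ : (Fin n → Fin k) → ℝ) {m : ℕ} {y y' : Fin n → Fin k}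
    (h : ∀ s : Fin n, s.1 < m → y s = y' s) : condF k φ m y = condF k φ m y' := by
  unfold condF
  congr 1
  exact Finset.sum_congr rfl fun z _ => by rw [spliceK_congr h]

lemma spliceK_update {n k : ℕ} (t : Fin n) (i : Fin k) (y z : Fin n → Fin k) :
    spliceK (t.1 + 1) (Function.update y t i) z
      = Function.update (spliceK (t.1 + 1) y z) t i := by
  funext s
  by_cases h : s = t
  · subst h; simp [spliceK, Function.update_self]
  · have h' : s.1 ≠ t.1 := fun hh => h (Fin.ext hh)
    simp only [spliceK, Function.update_of_ne h]

lemma spliceK_update_right {n k : ℕ} (t : Fin n) (i : Fin k) (y z : Fin n → Fin k) :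
    spliceK t.1 y (Function.update z t i) = spliceK (t.1 + 1) (Function.update y t i) z := by
  funext s
  by_cases h : s = t
  · subst h
    simp [spliceK, Function.update_self]
  · have h' : s.1 ≠ t.1 := fun hh => h (Fin.ext hh)
    simp only [spliceK, Function.update_of_ne h]
    rcases lt_trichotomy s.1 t.1 with hs | hs | hs
    · rw [if_pos hs, if_pos (Nat.lt_succ_of_lt hs)]
    · exact absurd hs h'
    · rw [if_neg (not_lt.2 (le_of_lt hs)), if_neg (by omega)]

/-- Martingale property of the conditional expectations. -/
lemma condF_succ {n k : ℕ} (φ : (Fin n → Fin k) → ℝ) (t : Fin n) (y : Fin n → Fin k) :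
    ∑ i : Fin k, condF k φ (t.1 + 1) (Function.update y t i)
      = k * condF k φ t.1 y := by
  unfold condF
  rw [← Finset.sum_div, ← mul_div_assoc]
  congr 1
  calc ∑ i : Fin k, ∑ z : Fin n → Fin k, φ (spliceK (t.1 + 1) (Function.update y t i) z)
      = ∑ i : Fin k, ∑ z : Fin n → Fin k, φ (spliceK t.1 y (Function.update z t i)) := by
        simp_rw [spliceK_update_right]
    _ = ∑ z : Fin n → Fin k, ∑ i : Fin k, φ (spliceK t.1 y (Function.update z t i)) :=
        Finset.sum_comm
    _ = k * ∑ z : Fin n → Fin k, φ (spliceK t.1 y z) :=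
        sum_update_eq n k t (fun z => φ (spliceK t.1 y z))

/-- Stability is inherited by the conditional expectations. -/
lemma condF_stable {n k : ℕ} {φ : (Fin n → Fin k) → ℝ}
    (hφ : StableK n k φ) (t : Fin n) (i : Fin k) (y : Fin n → Fin k) :
    condF k φ (t.1 + 1) (Function.update y t i)
      - (∑ j : Fin k, condF k φ (t.1 + 1) (Function.update y t j)) / k ≤ 1 / (n * k) := by
  have hkpos : (0:ℝ) < (k:ℝ)^n := by
    rcases Nat.eq_zero_or_pos k with hk | hk
    · subst hk; exact absurd i.2 (by omega)
    · positivity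
  unfold condF
  rw [← Finset.sum_div, div_div, mul_comm ((k:ℝ)^n) (k:ℝ), ← div_div, div_sub_div_same]
  rw [div_le_iff₀ hkpos]
  have key : ∀ z : Fin n → Fin k,
      φ (spliceK (t.1 + 1) (Function.update y t i) z)
        - (∑ j : Fin k, φ (spliceK (t.1 + 1) (Function.update y t j) z)) / k ≤ 1 / (n * k) := by
    intro z
    simp_rw [spliceK_update]
    exact hφ (spliceK (t.1+1) y z) t i
  calc (∑ z : Fin n → Fin k, φ (spliceK (t.1 + 1) (Function.update y t i) z))
        - (∑ j : Fin k, ∑ z : Fin n → Fin k, φ (spliceK (t.1 + 1) (Function.update y t j) z)) / k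
      = ∑ z : Fin n → Fin k, (φ (spliceK (t.1 + 1) (Function.update y t i) z)
          - (∑ j : Fin k, φ (spliceK (t.1 + 1) (Function.update y t j) z)) / k) := by
        rw [Finset.sum_sub_distrib, ← Finset.sum_div, Finset.sum_comm]
    _ ≤ ∑ z : Fin n → Fin k, 1 / ((n:ℝ) * k) := Finset.sum_le_sum (fun z _ => key z)
    _ = (k:ℝ)^n * (1 / (n * k)) := by
        rw [Finset.sum_const, card_univ, nsmul_eq_mul]
        congr 1
        simp [Fintype.card_fun]
    _ = 1 / (↑n * ↑k) * (k:ℝ)^n := mul_comm _ _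

lemma prefK_update {n k : ℕ} (y : Fin n → Fin k) (t : Fin n) (i : Fin k) :
    prefK (Function.update y t i) t = prefK y t := by
  funext s
  have hne : (⟨s.1, s.2.trans t.2⟩ : Fin n) ≠ t := by
    intro h
    exact absurd (congrArg Fin.val h) (Nat.ne_of_lt s.2)
  simp [prefK, Function.update_of_ne hne]

/-- multi-class Cover lemma: for stable `φ : [k]^n → ℝ`, there is a randomized
`k`-ary prediction algorithm achieving `μ_A(y) = φ(y)` for every `y` iff `E φ = 1 − 1/k` under
the uniform distribution on `[k]^n`. -/
theorem cover_lemma_multiclass (n k : ℕ) (hn : 1 ≤ n) (hk : 2 ≤ k)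
    (φ : (Fin n → Fin k) → ℝ) (hφ : StableK n k φ) :
    (∃ q : (t : Fin n) → (Fin t.1 → Fin k) → Fin k → ℝ,
      (∀ (t : Fin n) (h : Fin t.1 → Fin k) (i : Fin k), 0 ≤ q t h i) ∧
      (∀ (t : Fin n) (h : Fin t.1 → Fin k), ∑ i : Fin k, q t h i = 1) ∧
      ∀ y : Fin n → Fin k, mistakesK n k q y = φ y) ↔
    unifExpK n k φ = 1 - 1 / k := by
  have hkR : (0:ℝ) < (k:ℝ) := by exact_mod_cast Nat.lt_of_lt_of_le Nat.zero_lt_two hk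
  have hkne : (k:ℝ) ≠ 0 := ne_of_gt hkR
  have hnR : (0:ℝ) < (n:ℝ) := by exact_mod_cast Nat.lt_of_lt_of_le Nat.zero_lt_one hn
  have hnne : (n:ℝ) ≠ 0 := ne_of_gt hnR
  have hknpos : (0:ℝ) < (k:ℝ)^n := by positivity
  have hknne : ((k:ℝ)^n) ≠ 0 := ne_of_gt hknpos
  have hcard : (Fintype.card (Fin n → Fin k) : ℝ) = (k:ℝ)^n := by
    simp [Fintype.card_fun]
  constructor
  · -- forward direction
    rintro ⟨q, hq0, hq1, hqμ⟩
    have hsum_t : ∀ t : Fin n,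
        ∑ y : Fin n → Fin k, q t (prefK y t) (y t) = (k:ℝ)^n / k := by
      intro t
      have := sum_update_eq n k t (fun y => q t (prefK y t) (y t))
      have hL : ∑ y : Fin n → Fin k, ∑ i : Fin k,
          q t (prefK (Function.update y t i) t) ((Function.update y t i) t) = (k:ℝ)^n := by
        have : ∀ (y : Fin n → Fin k) (i : Fin k),
            q t (prefK (Function.update y t i) t) ((Function.update y t i) t)
              = q t (prefK y t) i := by
          intro y i
          rw [prefK_update, Function.update_self]
        simp_rw [this]
        simp only [hq1]
        rw [Finset.sum_const, card_univ, nsmul_eq_mul, mul_one, hcard]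
      rw [hL] at this
      field_simp at this ⊢
      linarith [this]
    have hφsum : ∑ y : Fin n → Fin k, φ y = (k:ℝ)^n * (1 - 1/k) := by
      have : ∑ y : Fin n → Fin k, φ y = ∑ y : Fin n → Fin k, mistakesK n k q y :=
        Finset.sum_congr rfl fun y _ => (hqμ y).symm
      rw [this]
      unfold mistakesK
      rw [← Finset.mul_sum, Finset.sum_comm]
      have : ∀ t : Fin n, ∑ y : Fin n → Fin k, (1 - q t (prefK y t) (y t))
          = (k:ℝ)^n - (k:ℝ)^n / k := by
        intro t
        rw [Finset.sum_sub_distrib, hsum_t t, Finset.sum_const, card_univ, nsmul_eq_mul,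
          mul_one, hcard]
      simp_rw [this]
      rw [Finset.sum_const, card_univ, Fintype.card_fin, nsmul_eq_mul]
      field_simp
    unfold unifExpK
    rw [hφsum]
    field_simp
  · -- backward direction
    intro hE
    have hk0 : 0 < k := by omega
    -- extend a prefix to a full sequence (by zeros)
    set ext : (t : Fin n) → (Fin t.1 → Fin k) → (Fin n → Fin k) :=
      fun t h s => if hs : s.1 < t.1 then h ⟨s.1, hs⟩ else ⟨0, hk0⟩ with hext
    refine ⟨fun t h i => 1/k - n * (condF k φ (t.1 + 1) (Function.update (ext t h) t i)
      - condF k φ t.1 (ext t h)), ?_, ?_, ?_⟩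
    · -- nonnegativity
      intro t h i
      set y := ext t h
      have h1 := condF_stable hφ t i y
      have h2 := condF_succ φ t y
      have h3 : (∑ j : Fin k, condF k φ (t.1 + 1) (Function.update y t j)) / k
          = condF k φ t.1 y := by rw [h2]; field_simp
      rw [h3] at h1
      have h4 : (n:ℝ) * (condF k φ (t.1 + 1) (Function.update y t i) - condF k φ t.1 y)
          ≤ (n:ℝ) * (1 / (n * k)) := by
        exact mul_le_mul_of_nonneg_left h1 (le_of_lt hnR)
      have h5 : (n:ℝ) * (1 / (n * k)) = 1 / k := by field_simp
      linarith [h4, h5 ▸ h4]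
    · -- sums to one
      intro t h
      have h2 := condF_succ φ t (ext t h)
      rw [Finset.sum_sub_distrib, ← Finset.mul_sum, Finset.sum_sub_distrib, h2]
      simp only [Finset.sum_const, card_univ, Fintype.card_fin, nsmul_eq_mul]
      field_simp
      ring
    · -- achieves φ
      intro y
      -- the prescribed probabilities agree with the ones along the true history
      have hq : ∀ (t : Fin n) (i : Fin k),
          (1/(k:ℝ) - n * (condF k φ (t.1 + 1) (Function.update (ext t (prefK y t)) t i)
            - condF k φ t.1 (ext t (prefK y t))))
          = 1/(k:ℝ) - n * (condF k φ (t.1 + 1) (Function.update y t i)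
            - condF k φ t.1 y) := by
        intro t i
        have e1 : condF k φ t.1 (ext t (prefK y t)) = condF k φ t.1 y := by
          apply condF_congr
          intro s hs
          simp only [hext, dif_pos hs, prefK]
        have e2 : condF k φ (t.1 + 1) (Function.update (ext t (prefK y t)) t i)
            = condF k φ (t.1 + 1) (Function.update y t i) := by
          apply condF_congr
          intro s hs
          by_cases hst : s = t
          · subst hst; simp [Function.update_self]
          · have hst' : s.1 ≠ t.1 := fun hh => hst (Fin.ext hh)
            have hlt : s.1 < t.1 := by omega
            rw [Function.update_of_ne hst, Function.update_of_ne hst]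
            simp only [hext, dif_pos hlt, prefK]
        rw [e1, e2]
      unfold mistakesK
      have hterm : ∀ t : Fin n,
          (1 : ℝ) - (1/(k:ℝ) - n * (condF k φ (t.1 + 1)
              (Function.update (ext t (prefK y t)) t (y t))
            - condF k φ t.1 (ext t (prefK y t))))
          = (1 - 1/k) + n * (condF k φ (t.1 + 1) y - condF k φ t.1 y) := by
        intro t
        rw [hq t (y t), Function.update_eq_self]
        ring
      simp_rw [hterm]
      rw [Finset.sum_add_distrib, ← Finset.mul_sum]
      have htel : ∑ t : Fin n, (condF k φ (t.1 + 1) y - condF k φ t.1 y)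
          = condF k φ n y - condF k φ 0 y := by
        rw [Fin.sum_univ_eq_sum_range (fun m => condF k φ (m + 1) y - condF k φ m y) n]
        exact Finset.sum_range_sub (fun m => condF k φ m y) n
      have hGn : condF k φ n y = φ y := by
        unfold condF
        simp_rw [spliceK_n]
        rw [Finset.sum_const, card_univ, nsmul_eq_mul, hcard]
        field_simp
      have hG0 : condF k φ 0 y = 1 - 1/k := by
        unfold condF
        simp_rw [spliceK_zero]
        rw [← hE]; rfl
      rw [htel, hGn, hG0]
      rw [Finset.sum_const, card_univ, Fintype.card_fin, nsmul_eq_mul]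
      field_simp
      ring
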